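/- If a language L ⊆ Σ* is generated by an admissible signed grammar over Σ, then there exist ordinary context-free grammars G₁ and G₂ over Σ, each having only finitely many parse trees for every word, such that for every w ∈ Σ*: a_w(G₁) − a_w(G₂) = 1 if w ∈ L, and a_w(G₁) − a_w(G₂) = 0 if w ∉ L, where a_w(Gᵢ) denotes the number of parse trees of Gᵢ with yield w. -/

import Mathlib

/-- A parse-tree node: either a terminal leaf or an internal node labeled by a
nonterminal with a list of children. -/
inductive PTree (N : Type) (T : Type) : Type where
  | leaf (t : T) : PTree N T
  | node (A : N) (children : List (PTree N T)) : PTree N T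

namespace PTree

variable {N T : Type}

/-- The symbol (nonterminal or terminal) labeling the root of a tree. -/
def toSymbol : PTree N T → N ⊕ T
  | leaf t => Sum.inr t
  | node A _ => Sum.inl A

/-- The yield of a parse tree: the word spelled by its leaves. -/
def yield : PTree N T → List T
  | leaf t => [t]
  | node _ cs => cs.attach.flatMap (fun c => yield c.1)
decreasing_by simp only [PTree.node.sizeOf_spec]; have h := List.sizeOf_lt_of_mem c.2; omega

/-- The sign of a parse tree w.r.t. a sign assignment on productions:
the product of the signs of the productions used at its nodes. -/
def sign (σ : N × List (N ⊕ T) → ℤ) : PTree N T → ℤ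
  | leaf _ => 1
  | node A cs => σ (A, cs.map toSymbol) * (cs.attach.map (fun c => sign σ c.1)).prod
decreasing_by simp only [PTree.node.sizeOf_spec]; have h := List.sizeOf_lt_of_mem c.2; omega

/-- Validity of a parse tree w.r.t. a set of productions: at every internal node,
the node label together with the list of symbols of its children is a production. -/
inductive Valid (R : Set (N × List (N ⊕ T))) : PTree N T → Prop where
  | leaf (t : T) : Valid R (PTree.leaf t)
  | node (A : N) (cs : List (PTree N T)) :
      (A, cs.map toSymbol) ∈ R → (∀ c ∈ cs, Valid R c) → Valid R (PTree.node A cs)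

end PTree

/-- A signed grammar over a (finite) terminal alphabet `T`: a context-free grammar
with finitely many nonterminals and productions, together with a sign `1` or `-1`
attached to each production. -/
structure SignedGrammar (T : Type) : Type 1 where
  /-- the type of nonterminals -/
  N : Type
  finN : Finite N
  /-- the start symbol -/
  start : N
  /-- the productions `A → α`, `α ∈ (N ∪ T)*` -/
  rules : Set (N × List (N ⊕ T))
  finRules : rules.Finite
  /-- the sign of each production -/
  sign : N × List (N ⊕ T) → ℤ
  sign_valid : ∀ r ∈ rules, sign r = 1 ∨ sign r = -1

namespace SignedGrammar

variable {T : Type}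

/-- A parse tree over the grammar: a valid tree whose root is labeled by the start symbol. -/
def IsParseTree (G : SignedGrammar T) (t : PTree G.N T) : Prop :=
  PTree.Valid G.rules t ∧ t.toSymbol = Sum.inl G.start

/-- The set of parse trees over `G` with yield `w`. -/
def parseTreesOf (G : SignedGrammar T) (w : List T) : Set (PTree G.N T) :=
  {t | G.IsParseTree t ∧ t.yield = w}

/-- `G` is admissible if every word has only finitely many parse trees. -/
def Admissible (G : SignedGrammar T) : Prop :=
  ∀ w : List T, (G.parseTreesOf w).Finite

/-- `n_w(G)`: the sum of the signs of all parse trees over `G` with yield `w`. -/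
noncomputable def count (G : SignedGrammar T) (w : List T) : ℤ :=
  ∑ᶠ t ∈ G.parseTreesOf w, t.sign G.sign

/-- `G` generates the language `L` if `G` is admissible, `n_w(G) = 1` for every
`w ∈ L` and `n_w(G) = 0` for every `w ∉ L`. -/
def Generates (G : SignedGrammar T) (L : Language T) : Prop :=
  G.Admissible ∧ (∀ w ∈ L, G.count w = 1) ∧ (∀ w ∉ L, G.count w = 0)

/-- An ordinary context-free grammar: every production has sign `+1`. -/
def Ordinary (G : SignedGrammar T) : Prop :=
  ∀ r ∈ G.rules, G.sign r = 1

/-- The language generated by `G` in the usual sense: all yields of parse trees. -/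
def language (G : SignedGrammar T) : Language T :=
  {w | ∃ t : PTree G.N T, G.IsParseTree t ∧ t.yield = w}

/-- `G` is unambiguous if every word has at most one parse tree. -/
def Unambiguous (G : SignedGrammar T) : Prop :=
  ∀ t₁ t₂ : PTree G.N T, G.IsParseTree t₁ → G.IsParseTree t₂ →
    t₁.yield = t₂.yield → t₁ = t₂

/-- The number of parse trees of `G` with yield `w` (degree of ambiguity of `w`). -/
noncomputable def ambCount (G : SignedGrammar T) (w : List T) : ℕ :=
  Nat.card {t : PTree G.N T // t ∈ G.parseTreesOf w}

end SignedGrammar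



/-!
Refine every nonterminal `A` of `G` into `(A, s)`, where `s ∈ {-1, 0, 1}` is meant to record the
sign of the subtree below it, and keep the production `(A, s) → β` exactly when `s` is the sign
of the underlying production of `G` times the signs recorded in `β`. Erasing the refinement is
then a bijection from the parse trees of this ordinary grammar with start symbol `(S, s)` onto
the parse trees of `G` of sign `s`; its inverse labels each node with the sign of its subtree.
Since every parse tree of `G` has sign `±1`, `n_w(G) = a_w(G₊) - a_w(G₋)` for the two start
symbols `(S, 1)` and `(S, -1)`.
-/

theorem List.finite_setOf_map_eq {α β : Type*} {f : α → β}
    (hf : ∀ b, (f ⁻¹' {b}).Finite) :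
    ∀ l : List β, {l' : List α | l'.map f = l}.Finite
  | [] => (Set.finite_singleton []).subset fun l' h => by simpa using h
  | b :: l => ((hf b).image2 cons (finite_setOf_map_eq hf l)).subset fun l' h => by
      cases l' with
      | nil => simp at h
      | cons a l' =>
        simp only [Set.mem_ofPred_eq, map_cons, cons.injEq] at h
        exact Set.mem_image2_of_mem h.1 h.2

theorem finite_preimage_sumMap_fst {N S T : Type*} [Finite S] (x : N ⊕ T) :
    (Sum.map Prod.fst id ⁻¹' {x} : Set ((N × S) ⊕ T)).Finite := by
  rcases x with A | t
  · exact (Set.finite_range fun s : S => (.inl (A, s) : (N × S) ⊕ T)).subset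
      (by rintro (⟨B, s⟩ | u) h <;> simp_all)
  · exact (Set.finite_singleton (.inr t)).subset (by rintro (⟨B, s⟩ | u) h <;> simp_all)

theorem SignType.sign_intCast (s : SignType) : SignType.sign (s : ℤ) = s := by
  cases s <;> decide

theorem SignType.coe_sign_of_isUnit {x : ℤ} (hx : IsUnit x) : (SignType.sign x : ℤ) = x := by
  rcases Int.isUnit_iff.1 hx with rfl | rfl <;> decide

theorem Set.Finite.finsum_mem_eq_ncard_sub_ncard {α : Type*} {s : Set α} (hs : s.Finite)
    {f : α → ℤ} (hf : ∀ x ∈ s, IsUnit (f x)) :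
    ∑ᶠ x ∈ s, f x = ({x ∈ s | f x = 1}.ncard : ℤ) - {x ∈ s | f x = -1}.ncard := by
  classical
  have hsplit : ∀ x ∈ hs.toFinset,
      f x = (if f x = 1 then 1 else 0) - (if f x = -1 then 1 else 0) := by
    intro x hx
    rcases Int.isUnit_iff.1 (hf x (hs.mem_toFinset.1 hx)) with h | h <;> simp [h]
  rw [finsum_mem_eq_finite_toFinset_sum f hs, Finset.sum_congr rfl hsplit, Finset.sum_sub_distrib,
    Finset.sum_boole, Finset.sum_boole]
  simp only [← Set.ncard_coe_finset, Finset.coe_filter, Set.Finite.mem_toFinset]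

namespace PTree
variable {N M T : Type}

@[induction_eliminator]
theorem induction {motive : PTree N T → Prop} (leaf : ∀ t : T, motive (.leaf t))
    (node : ∀ (A : N) (cs : List (PTree N T)), (∀ c ∈ cs, motive c) → motive (.node A cs)) :
    ∀ t : PTree N T, motive t
  | .leaf t => leaf t
  | .node A cs => node A cs fun c _ => induction leaf node c

@[simp] theorem yield_leaf (t : T) : (leaf t : PTree N T).yield = [t] := by rw [yield]

@[simp] theorem yield_node (A : N) (cs : List (PTree N T)) :
    (node A cs).yield = cs.flatMap yield := by rw [yield]; simp

@[simp] theorem sign_leaf (σ : N × List (N ⊕ T) → ℤ) (t : T) :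
    (leaf t : PTree N T).sign σ = 1 := by
  rw [sign]

@[simp] theorem sign_node (σ : N × List (N ⊕ T) → ℤ) (A : N) (cs : List (PTree N T)) :
    (node A cs).sign σ = σ (A, cs.map toSymbol) * (cs.map (sign σ)).prod := by
  rw [sign]; simp

@[simp] theorem toSymbol_leaf (t : T) : (leaf t : PTree N T).toSymbol = .inr t := rfl

@[simp] theorem toSymbol_node (A : N) (cs : List (PTree N T)) :
    (node A cs).toSymbol = .inl A := rfl

theorem isUnit_sign {R : Set (N × List (N ⊕ T))} {σ : N × List (N ⊕ T) → ℤ}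
    (hσ : ∀ r ∈ R, IsUnit (σ r)) {t : PTree N T} (h : Valid R t) : IsUnit (t.sign σ) := by
  induction h with
  | leaf => simp
  | node A cs hr _ ih =>
    rw [sign_node]
    exact (hσ _ hr).mul (List.prod_isUnit fun x hx => by
      obtain ⟨c, hc, rfl⟩ := List.mem_map.1 hx
      exact ih c hc)

def map (f : N → M) : PTree N T → PTree M T
  | leaf t => leaf t
  | node A cs => node (f A) (cs.map (map f))

@[simp] theorem map_leaf (f : N → M) (t : T) : (leaf t).map f = leaf t := by
  rw [map]

@[simp] theorem map_node (f : N → M) (A : N) (cs : List (PTree N T)) :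
    (node A cs).map f = node (f A) (cs.map (map f)) := by
  rw [map]

@[simp] theorem toSymbol_map (f : N → M) (t : PTree N T) :
    (t.map f).toSymbol = Sum.map f id t.toSymbol := by
  cases t <;> simp

@[simp] theorem yield_map (f : N → M) (t : PTree N T) : (t.map f).yield = t.yield := by
  induction t with
  | leaf t => simp
  | node A cs ih => simpa [List.flatMap_map] using List.flatMap_congr ih

theorem Valid.map {R : Set (N × List (N ⊕ T))} {R' : Set (M × List (M ⊕ T))} {f : N → M}
    (hR : ∀ r ∈ R, (f r.1, r.2.map (Sum.map f id)) ∈ R') {t : PTree N T} (h : Valid R t) :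
    Valid R' (t.map f) := by
  induction h with
  | leaf t => exact map_leaf f t ▸ .leaf t
  | node A cs hr _ ih =>
    rw [map_node]
    refine .node _ _ ?_ ?_
    · simpa [Function.comp_def] using hR _ hr
    · simpa using ih

noncomputable def decorate (σ : N × List (N ⊕ T) → ℤ) :
    PTree N T → PTree (N × SignType) T
  | leaf t => leaf t
  | node A cs => node (A, SignType.sign ((node A cs).sign σ)) (cs.map (decorate σ))

@[simp] theorem decorate_leaf (σ : N × List (N ⊕ T) → ℤ) (t : T) :
    (leaf t).decorate σ = leaf t := by
  rw [decorate]

@[simp] theorem decorate_node (σ : N × List (N ⊕ T) → ℤ) (A : N) (cs : List (PTree N T)) :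
    (node A cs).decorate σ
      = node (A, SignType.sign ((node A cs).sign σ)) (cs.map (decorate σ)) := by
  rw [decorate]

theorem map_fst_decorate (σ : N × List (N ⊕ T) → ℤ) (t : PTree N T) :
    (t.decorate σ).map Prod.fst = t := by
  induction t with
  | leaf t => simp
  | node A cs ih => simpa [Function.comp_def] using List.map_congr_left ih

theorem toSymbol_decorate (σ : N × List (N ⊕ T) → ℤ) (t : PTree N T) :
    (t.decorate σ).toSymbol = Sum.map (·, SignType.sign (t.sign σ)) id t.toSymbol := by
  cases t <;> simp

end PTree

namespace SignedGrammar
open PTree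

variable {T : Type}

def symbolSign {N : Type} : (N × SignType) ⊕ T → ℤ :=
  Sum.elim (fun a => a.2) fun _ => 1

theorem symbolSign_toSymbol_decorate {N : Type} {σ : N × List (N ⊕ T) → ℤ} {t : PTree N T}
    (ht : IsUnit (t.sign σ)) : symbolSign (t.decorate σ).toSymbol = t.sign σ := by
  cases t with
  | leaf t => simp [symbolSign]
  | node A cs => simpa [symbolSign] using SignType.coe_sign_of_isUnit ht

variable (G : SignedGrammar T)

theorem isUnit_sign_of_mem_rules (r : G.N × List (G.N ⊕ T)) (hr : r ∈ G.rules) :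
    IsUnit (G.sign r) :=
  Int.isUnit_iff.2 (G.sign_valid r hr)

def signRules : Set ((G.N × SignType) × List ((G.N × SignType) ⊕ T)) :=
  {r | (r.1.1, r.2.map (Sum.map Prod.fst id)) ∈ G.rules ∧
    (r.1.2 : ℤ) = G.sign (r.1.1, r.2.map (Sum.map Prod.fst id)) * (r.2.map symbolSign).prod}

theorem signRules_finite : G.signRules.Finite := by
  refine (G.finRules.preimage' fun p _ => ?_).subset fun r hr =>
    (show Prod.map Prod.fst (List.map (Sum.map Prod.fst id)) r ∈ G.rules from hr.1)
  rw [← Set.singleton_prod_singleton, Set.preimage_prod_map_prod]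
  have := G.finN
  exact (Set.toFinite _).prod (List.finite_setOf_map_eq finite_preimage_sumMap_fst _)

def signPart (s : SignType) : SignedGrammar T where
  N := G.N × SignType
  finN := have := G.finN; inferInstance
  start := (G.start, s)
  rules := G.signRules
  finRules := G.signRules_finite
  sign := fun _ => 1
  sign_valid := fun _ _ => .inl rfl

theorem signPart_ordinary (s : SignType) : (G.signPart s).Ordinary := fun _ _ => rfl

theorem symbolSign_toSymbol {t : PTree (G.N × SignType) T} (h : Valid G.signRules t) :
    symbolSign t.toSymbol = (t.map Prod.fst).sign G.sign := by
  induction h with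
  | leaf t => simp [symbolSign]
  | node A cs hr _ ih =>
    have hsymb : (cs.map (map Prod.fst)).map toSymbol
        = (cs.map toSymbol).map (Sum.map Prod.fst id) := by
      simp [Function.comp_def]
    have hsigns : (cs.map toSymbol).map symbolSign
        = (cs.map (map Prod.fst)).map (PTree.sign G.sign) := by
      simpa [Function.comp_def] using List.map_congr_left ih
    rw [map_node, sign_node, hsymb, ← hsigns]
    exact hr.2

theorem valid_decorate {t : PTree G.N T} (h : Valid G.rules t) :
    Valid G.signRules (t.decorate G.sign) := by
  induction h with
  | leaf t => exact decorate_leaf G.sign t ▸ .leaf t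
  | node A cs hr hcs ih =>
    have hsymb : ((cs.map (decorate G.sign)).map toSymbol).map (Sum.map Prod.fst id)
        = cs.map toSymbol := by
      simp only [List.map_map]
      exact List.map_congr_left fun c _ => by simp [← toSymbol_map, map_fst_decorate]
    have hsigns : ((cs.map (decorate G.sign)).map toSymbol).map symbolSign
        = cs.map (PTree.sign G.sign) := by
      simp only [List.map_map]
      exact List.map_congr_left fun c hc =>
        symbolSign_toSymbol_decorate (isUnit_sign G.isUnit_sign_of_mem_rules (hcs c hc))
    rw [decorate_node]
    refine .node _ _ ⟨hsymb ▸ hr, ?_⟩ (by simpa using ih)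
    rw [hsymb, hsigns, ← sign_node,
      SignType.coe_sign_of_isUnit (isUnit_sign G.isUnit_sign_of_mem_rules (.node A cs hr hcs))]

theorem decorate_map_fst {t : PTree (G.N × SignType) T} (h : Valid G.signRules t) :
    (t.map Prod.fst).decorate G.sign = t := by
  induction h with
  | leaf t => simp
  | node A cs hr hcs ih =>
    have hroot := G.symbolSign_toSymbol (.node A cs hr hcs)
    rw [toSymbol_node, symbolSign, Sum.elim_inl] at hroot
    rw [map_node, decorate_node, ← map_node, ← hroot, SignType.sign_intCast, List.map_map]
    simpa [Function.comp_def] using List.map_congr_left ih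

theorem bijOn_map_fst (s : SignType) (w : List T) :
    Set.BijOn (PTree.map Prod.fst)
      {t | (Valid G.signRules t ∧ t.toSymbol = .inl (G.start, s)) ∧ t.yield = w}
      {t ∈ G.parseTreesOf w | t.sign G.sign = s} := by
  refine ⟨?_, ?_, ?_⟩
  · rintro t ⟨⟨hv, hroot⟩, hy⟩
    refine ⟨⟨⟨hv.map fun r hr => hr.1, ?_⟩, by rw [yield_map, hy]⟩, ?_⟩
    · rw [toSymbol_map, hroot]; rfl
    · rw [← G.symbolSign_toSymbol hv, hroot]; rfl
  · intro t₁ h₁ t₂ h₂ h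
    rw [← G.decorate_map_fst h₁.1.1, ← G.decorate_map_fst h₂.1.1, h]
  · rintro t ⟨⟨⟨hv, hroot⟩, hy⟩, hs⟩
    refine ⟨t.decorate G.sign, ⟨⟨G.valid_decorate hv, ?_⟩, ?_⟩, map_fst_decorate _ _⟩
    · rw [toSymbol_decorate, hroot, hs, SignType.sign_intCast]; rfl
    · rw [← yield_map Prod.fst, map_fst_decorate, hy]

theorem signPart_admissible (hG : G.Admissible) (s : SignType) : (G.signPart s).Admissible :=
  fun w => ((hG w).sep _).of_injOn (G.bijOn_map_fst s w).mapsTo (G.bijOn_map_fst s w).injOn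

theorem ambCount_signPart (s : SignType) (w : List T) :
    (G.signPart s).ambCount w = {t ∈ G.parseTreesOf w | t.sign G.sign = s}.ncard :=
  (Nat.card_coe_set_eq _).trans (G.bijOn_map_fst s w).ncard_eq

theorem count_eq_ambCount_sub_ambCount (hG : G.Admissible) (w : List T) :
    G.count w = (G.signPart 1).ambCount w - (G.signPart (-1)).ambCount w := by
  rw [count, (hG w).finsum_mem_eq_ncard_sub_ncard fun t ht =>
      isUnit_sign G.isUnit_sign_of_mem_rules ht.1.1, ambCount_signPart, ambCount_signPart,
    SignType.coe_one, SignType.coe_neg_one]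

end SignedGrammar

theorem signed_grammar_difference_of_CFGs_general
    (T : Type) (L : Language T)
    (G : SignedGrammar T) (hG : G.Generates L) :
    ∃ G₁ G₂ : SignedGrammar T, G₁.Ordinary ∧ G₂.Ordinary ∧
      G₁.Admissible ∧ G₂.Admissible ∧
      (∀ w ∈ L, (G₁.ambCount w : ℤ) - (G₂.ambCount w : ℤ) = 1) ∧
      (∀ w ∉ L, (G₁.ambCount w : ℤ) - (G₂.ambCount w : ℤ) = 0) := by
  obtain ⟨hadm, hL, hnL⟩ := hG
  refine ⟨G.signPart 1, G.signPart (-1), G.signPart_ordinary 1, G.signPart_ordinary (-1),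
    G.signPart_admissible hadm 1, G.signPart_admissible hadm (-1), fun w hw => ?_, fun w hw => ?_⟩
  · rw [← G.count_eq_ambCount_sub_ambCount hadm, hL w hw]
  · rw [← G.count_eq_ambCount_sub_ambCount hadm, hnL w hw]

/-- If `L` is generated by an admissible signed grammar, then there are two ordinary
context-free grammars `G₁`, `G₂`, each with finitely many parse trees per word, such
that the difference of the numbers of parse trees for `w` is `1` if `w ∈ L` and `0`
otherwise. -/
theorem signed_grammar_difference_of_CFGs
    (T : Type) [Fintype T] (L : Language T)
    (G : SignedGrammar T) (hG : G.Generates L) :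
    ∃ G₁ G₂ : SignedGrammar T, G₁.Ordinary ∧ G₂.Ordinary ∧
      G₁.Admissible ∧ G₂.Admissible ∧
      (∀ w ∈ L, (G₁.ambCount w : ℤ) - (G₂.ambCount w : ℤ) = 1) ∧
      (∀ w ∉ L, (G₁.ambCount w : ℤ) - (G₂.ambCount w : ℤ) = 0) :=
  signed_grammar_difference_of_CFGs_general T L G hG
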